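/- Let X, Y be independent exponential random variables with means λ_a and λ_b, let P_b be uniform on [0, P] independent of X, Y, and let μ, φ, σ² > 0. Then P( X < μ(φ·P_b·Y + σ²) ) = 1 − λ_a · e^{−μσ²/λ_a} · ( ln(μφλ_b P + λ_a) − ln λ_a ) / ( μφλ_b P ). -/

import Mathlib

/-!
Pass to the complementary event `μ(φ P_b Y + σ²) ≤ X`, whose probability is an integral of
exponentials with nothing subtracted: given `(Y, P_b)` it is `e^{-μσ²/λ_a} e^{-μφ P_b Y/λ_a}`.
Averaging over `Y` evaluates the Laplace transform of an exponential law, giving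
`e^{-μσ²/λ_a} λ_a / (λ_a + μφλ_b P_b)`, and averaging this over `P_b` produces the logarithm.
-/

open MeasureTheory ProbabilityTheory Set Real

lemma lintegral_Ici_exp_neg_mul {a : ℝ} (ha : 0 < a) (t : ℝ) :
    ∫⁻ y in Ici t, ENNReal.ofReal (exp (-(a * y))) = ENNReal.ofReal (exp (-(a * t)) / a) := by
  have hint : IntegrableOn (fun y => exp (-(a * y))) (Ioi t) := by
    simpa only [neg_mul] using exp_neg_integrableOn_Ioi t ha
  rw [setLIntegral_congr Ioi_ae_eq_Ici.symm,
    ← ofReal_integral_eq_lintegral_ofReal hint (ae_of_all _ fun _ => (exp_pos _).le)]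
  simp only [← neg_mul]
  rw [integral_exp_mul_Ioi (neg_lt_zero.2 ha), div_neg, neg_div, neg_neg]

lemma exponentialPDF_eq_indicator (r : ℝ) :
    exponentialPDF r = (Ici 0).indicator fun y => ENNReal.ofReal (r * exp (-(r * y))) := by
  ext y
  by_cases hy : 0 ≤ y
  · rw [exponentialPDF_of_nonneg hy, indicator_of_mem (mem_Ici.2 hy)]
  · rw [exponentialPDF_of_neg (not_le.1 hy), indicator_of_notMem (by simpa using hy)]

lemma expMeasure_eq_withDensity (r : ℝ) :
    expMeasure r = (volume.restrict (Ici 0)).withDensity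
      fun y => ENNReal.ofReal (r * exp (-(r * y))) := by
  rw [← withDensity_indicator measurableSet_Ici, ← exponentialPDF_eq_indicator]
  rfl

lemma ae_nonneg_expMeasure (r : ℝ) : ∀ᵐ y ∂expMeasure r, 0 ≤ y := by
  rw [expMeasure_eq_withDensity]
  exact (withDensity_absolutelyContinuous _ _).ae_le (ae_restrict_mem measurableSet_Ici)

lemma expMeasure_Ici {r t : ℝ} (hr : 0 < r) (ht : 0 ≤ t) :
    expMeasure r (Ici t) = ENNReal.ofReal (exp (-(r * t))) := by
  rw [expMeasure_eq_withDensity, withDensity_apply _ measurableSet_Ici,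
    Measure.restrict_restrict measurableSet_Ici, Ici_inter_Ici, max_eq_left ht]
  simp_rw [ENNReal.ofReal_mul hr.le]
  rw [lintegral_const_mul _ (by fun_prop), lintegral_Ici_exp_neg_mul hr,
    ← ENNReal.ofReal_mul hr.le, mul_div_cancel₀ _ hr.ne']

lemma lintegral_exp_neg_mul_expMeasure {r c : ℝ} (hr : 0 < r) (hrc : 0 < r + c) :
    ∫⁻ y, ENNReal.ofReal (exp (-(c * y))) ∂expMeasure r = ENNReal.ofReal (r / (r + c)) := by
  rw [expMeasure_eq_withDensity, lintegral_withDensity_eq_lintegral_mul _ (by fun_prop)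
    (by fun_prop)]
  have h : ∀ y, ENNReal.ofReal (r * exp (-(r * y))) * ENNReal.ofReal (exp (-(c * y)))
      = ENNReal.ofReal r * ENNReal.ofReal (exp (-((r + c) * y))) := by
    intro y
    rw [← ENNReal.ofReal_mul hr.le, ← ENNReal.ofReal_mul (by positivity), mul_assoc, ← exp_add]
    ring_nf
  simp only [Pi.mul_apply, h]
  rw [lintegral_const_mul _ (by fun_prop), lintegral_Ici_exp_neg_mul hrc, mul_zero, neg_zero,
    exp_zero, ← ENNReal.ofReal_mul hr.le, mul_one_div]

lemma lintegral_expMeasure_Ici_add_mul {la lb a c : ℝ} (hla : 0 < la) (hlb : 0 < lb)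
    (ha : 0 ≤ a) (hc : 0 ≤ c) :
    ∫⁻ y, expMeasure (1 / la) (Ici (a + c * y)) ∂expMeasure (1 / lb)
      = ENNReal.ofReal (exp (-a / la)) * ENNReal.ofReal (la / (la + c * lb)) := by
  have h : ∀ᵐ y ∂expMeasure (1 / lb), expMeasure (1 / la) (Ici (a + c * y))
      = ENNReal.ofReal (exp (-a / la)) * ENNReal.ofReal (exp (-(c / la * y))) := by
    filter_upwards [ae_nonneg_expMeasure _] with y hy
    rw [expMeasure_Ici (by positivity) (by positivity), ← ENNReal.ofReal_mul (exp_pos _).le,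
      ← exp_add]
    ring_nf
  rw [lintegral_congr_ae h, lintegral_const_mul _ (by fun_prop),
    lintegral_exp_neg_mul_expMeasure (by positivity) (by positivity)]
  congr 2
  field_simp

lemma integral_inv_add_mul {a K P : ℝ} (ha : 0 < a) (haKP : 0 < a + K * P) (hK : K ≠ 0) :
    ∫ t in 0..P, (a + K * t)⁻¹ = K⁻¹ * log ((a + K * P) / a) := by
  rw [intervalIntegral.integral_comp_add_mul (fun x => x⁻¹) hK, mul_zero, add_zero,
    integral_inv_of_pos ha haKP, smul_eq_mul]

lemma lintegral_div_add_mul_uniform {a K P : ℝ} (ha : 0 < a) (hK : 0 < K) (hP : 0 < P) :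
    ∫⁻ t, ENNReal.ofReal (a / (a + K * t)) ∂((ENNReal.ofReal P)⁻¹ • volume.restrict (Icc 0 P))
      = ENNReal.ofReal (a * (log (K * P + a) - log a) / (K * P)) := by
  have hpos : ∀ t ∈ Icc 0 P, 0 < a + K * t := fun t ht => by nlinarith [ht.1]
  have hcont : ContinuousOn (fun t => a / (a + K * t)) (Icc 0 P) :=
    continuousOn_const.div (by fun_prop) fun t ht => (hpos t ht).ne'
  rw [lintegral_smul_measure, ← ofReal_integral_eq_lintegral_ofReal hcont.integrableOn_Icc
      ((ae_restrict_iff' measurableSet_Icc).2 (ae_of_all _ fun t ht => (div_pos ha (hpos t ht)).le)),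
    integral_Icc_eq_integral_Ioc, ← intervalIntegral.integral_of_le hP.le]
  simp_rw [div_eq_mul_inv a]
  rw [intervalIntegral.integral_const_mul, integral_inv_add_mul ha (by positivity) hK.ne',
    ← ENNReal.ofReal_inv_of_pos hP, smul_eq_mul, ← ENNReal.ofReal_mul (by positivity),
    log_div (by positivity) ha.ne', add_comm a]
  congr 1
  field_simp

lemma isProbabilityMeasure_uniform_Icc {P : ℝ} (hP : 0 < P) :
    IsProbabilityMeasure ((ENNReal.ofReal P)⁻¹ • volume.restrict (Icc 0 P)) := by
  constructor
  rw [Measure.smul_apply, Measure.restrict_apply_univ, Real.volume_Icc, sub_zero, smul_eq_mul,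
    ENNReal.inv_mul_cancel (by simpa using hP) ENNReal.ofReal_ne_top]

lemma prod_setOf_fst_lt_eq_one_sub {β : Type*} [MeasurableSpace β] {μ : Measure ℝ} {ν : Measure β}
    [IsProbabilityMeasure μ] [IsProbabilityMeasure ν] {g : β → ℝ} (hg : Measurable g) :
    (μ.prod ν) {p | p.1 < g p.2} = 1 - ∫⁻ q, μ (Ici (g q)) ∂ν := by
  have hT : MeasurableSet {p : ℝ × β | g p.2 ≤ p.1} :=
    measurableSet_le (hg.comp measurable_snd) measurable_fst
  simp_rw [← not_le]
  rw [← compl_ofPred, prob_compl_eq_one_sub hT, Measure.prod_apply_symm hT]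
  rfl

/-- outage probability of the Alice-to-Bob link (Lemma 2). X, Y are
independent exponentials with means λa, λb and Pb is uniform on [0, P], independent of
X and Y (realized on the product space with the product measure). -/
theorem stmt_11 (lama lamb m phi σ2 P : ℝ)
    (hlama : 0 < lama) (hlamb : 0 < lamb) (hm : 0 < m) (hphi : 0 < phi)
    (hσ2 : 0 < σ2) (hP : 0 < P) :
    ((expMeasure (1 / lama)).prod
        ((expMeasure (1 / lamb)).prod
          ((ENNReal.ofReal P)⁻¹ • volume.restrict (Icc 0 P))))
      {p : ℝ × ℝ × ℝ | p.1 < m * (phi * p.2.2 * p.2.1 + σ2)} =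
      ENNReal.ofReal (1 - lama * Real.exp (-(m * σ2) / lama) *
        (Real.log (m * phi * lamb * P + lama) - Real.log lama) / (m * phi * lamb * P)) := by
  have := isProbabilityMeasure_uniform_Icc hP
  have := isProbabilityMeasure_expMeasure (one_div_pos.2 hlama)
  have := isProbabilityMeasure_expMeasure (one_div_pos.2 hlamb)
  have hsurv : Measurable fun t => expMeasure (1 / lama) (Ici t) :=
    Antitone.measurable fun _ _ h => measure_mono (Ici_subset_Ici.2 h)
  rw [prod_setOf_fst_lt_eq_one_sub (g := fun q : ℝ × ℝ => m * (phi * q.2 * q.1 + σ2)) (by fun_prop),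
    lintegral_prod_symm (fun q => expMeasure (1 / lama) (Ici (m * (phi * q.2 * q.1 + σ2))))
      (hsurv.comp (by fun_prop)).aemeasurable]
  have hinner : ∀ᵐ pb ∂((ENNReal.ofReal P)⁻¹ • volume.restrict (Icc 0 P)),
      ∫⁻ y, expMeasure (1 / lama) (Ici (m * (phi * pb * y + σ2))) ∂expMeasure (1 / lamb)
        = ENNReal.ofReal (exp (-(m * σ2) / lama)) *
          ENNReal.ofReal (lama / (lama + m * phi * lamb * pb)) := by
    filter_upwards [Measure.ae_smul_measure (ae_restrict_mem measurableSet_Icc) _] with pb hpb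
    have hpb0 : 0 ≤ pb := hpb.1
    simp_rw [show ∀ y, m * (phi * pb * y + σ2) = m * σ2 + m * phi * pb * y from fun y => by ring]
    rw [lintegral_expMeasure_Ici_add_mul hlama hlamb (by positivity) (by positivity),
      mul_right_comm _ pb]
  rw [lintegral_congr_ae hinner, lintegral_const_mul _ (by fun_prop),
    lintegral_div_add_mul_uniform hlama (by positivity) hP, ← ENNReal.ofReal_mul (exp_pos _).le,
    ← ENNReal.ofReal_one, ← ENNReal.ofReal_sub _ ?_]
  · congr 1
    ring
  · have : log lama ≤ log (m * phi * lamb * P + lama) :=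
      log_le_log hlama (lt_add_of_pos_left _ (by positivity)).le
    positivity
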